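/- CHSH version of Hardy's equations: For any probability space (Ω, μ) and measurable functions A₁, A₂, B₁, B₂ : Ω → {−1, +1}, one has μ({A₂ = +1} ∩ {B₂ = +1}) − μ({A₁ = +1} ∩ {B₁ = +1}) − μ({A₂ = +1} ∩ {B₁ = −1}) − μ({A₁ = −1} ∩ {B₂ = +1}) ≤ 0. Equivalently, writing ε₁ = μ({A₁=+1}∩{B₁=+1}), ε₂ = μ({A₂=+1}∩{B₁=−1}), ε₃ = μ({A₁=−1}∩{B₂=+1}), ε₅ = μ({A₂=+1}∩{B₂=+1}), one has ε₅ ≤ ε₁ + ε₂ + ε₃. -/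

import Mathlib

open MeasureTheory

theorem measure_le_add_add_of_subset_union {Ω : Type*} [MeasurableSpace Ω] (μ : Measure Ω)
    {s t₁ t₂ t₃ : Set Ω} (h : s ⊆ t₁ ∪ t₂ ∪ t₃) : μ s ≤ μ t₁ + μ t₂ + μ t₃ :=
  calc μ s ≤ μ (t₁ ∪ t₂ ∪ t₃) := measure_mono h
    _ ≤ μ (t₁ ∪ t₂) + μ t₃ := measure_union_le _ _
    _ ≤ μ t₁ + μ t₂ + μ t₃ := add_le_add_left (measure_union_le _ _) _

theorem hardy_event_subset {Ω : Type*} (A₁ A₂ B₁ B₂ : Ω → ℝ)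
    (hA₁v : ∀ ω, A₁ ω = 1 ∨ A₁ ω = -1) (hB₁v : ∀ ω, B₁ ω = 1 ∨ B₁ ω = -1) :
    {ω | A₂ ω = 1} ∩ {ω | B₂ ω = 1} ⊆
      ({ω | A₁ ω = 1} ∩ {ω | B₁ ω = 1}) ∪
      ({ω | A₂ ω = 1} ∩ {ω | B₁ ω = -1}) ∪
      ({ω | A₁ ω = -1} ∩ {ω | B₂ ω = 1}) := by
  rintro ω ⟨hA₂, hB₂⟩
  rcases hA₁v ω with hA₁ | hA₁
  · rcases hB₁v ω with hB₁ | hB₁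
    · exact Or.inl (Or.inl ⟨hA₁, hB₁⟩)
    · exact Or.inl (Or.inr ⟨hA₂, hB₁⟩)
  · exact Or.inr ⟨hA₁, hB₂⟩

theorem hardy_chsh_bound_general {Ω : Type*} [MeasurableSpace Ω]
    (μ : Measure Ω)
    (A₁ A₂ B₁ B₂ : Ω → ℝ)
    (hA₁v : ∀ ω, A₁ ω = 1 ∨ A₁ ω = -1)
    (hB₁v : ∀ ω, B₁ ω = 1 ∨ B₁ ω = -1) :
    μ ({ω | A₂ ω = 1} ∩ {ω | B₂ ω = 1}) ≤
      μ ({ω | A₁ ω = 1} ∩ {ω | B₁ ω = 1}) +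
      μ ({ω | A₂ ω = 1} ∩ {ω | B₁ ω = -1}) +
      μ ({ω | A₁ ω = -1} ∩ {ω | B₂ ω = 1}) :=
  measure_le_add_add_of_subset_union μ (hardy_event_subset A₁ A₂ B₁ B₂ hA₁v hB₁v)

/-- CHSH version of Hardy's equations: for any local hidden variable model
(probability space with four measurable ±1-valued random variables), the Hardy
probability ε₅ = μ({A₂=+1}∩{B₂=+1}) is bounded by the sum
ε₁ + ε₂ + ε₃ of the three error probabilities; equivalently
ε₅ − ε₁ − ε₂ − ε₃ ≤ 0. -/
theorem hardy_chsh_bound {Ω : Type*} [MeasurableSpace Ω]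
    (μ : Measure Ω) [IsProbabilityMeasure μ]
    (A₁ A₂ B₁ B₂ : Ω → ℝ)
    (hA₁ : Measurable A₁) (hA₂ : Measurable A₂)
    (hB₁ : Measurable B₁) (hB₂ : Measurable B₂)
    (hA₁v : ∀ ω, A₁ ω = 1 ∨ A₁ ω = -1) (hA₂v : ∀ ω, A₂ ω = 1 ∨ A₂ ω = -1)
    (hB₁v : ∀ ω, B₁ ω = 1 ∨ B₁ ω = -1) (hB₂v : ∀ ω, B₂ ω = 1 ∨ B₂ ω = -1) :
    μ ({ω | A₂ ω = 1} ∩ {ω | B₂ ω = 1}) ≤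
      μ ({ω | A₁ ω = 1} ∩ {ω | B₁ ω = 1}) +
      μ ({ω | A₂ ω = 1} ∩ {ω | B₁ ω = -1}) +
      μ ({ω | A₁ ω = -1} ∩ {ω | B₂ ω = 1}) :=
  hardy_chsh_bound_general μ A₁ A₂ B₁ B₂ hA₁v hB₁v
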